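/- arXiv:1604.02302 — 3 statements merged into one kernel-verified Lean document; each statement's English description precedes it below -/
import Mathlib

section
/- In the balanced compound model Λ₂ = A − Λ₁ with Λ₁ supported in (0,A), the cross J-function J₁₂(t) = E[Λ₁·exp(−(A−Λ₁)·κ_d·t^d/E[A−Λ₁])] / (E[Λ₁]·E[exp(−(A−Λ₁)·κ_d·t^d/E[A−Λ₁])]) satisfies J₁₂(t) ≥ 1 for all t ≥ 0. -/
/-!
Chebyshev's association inequality: if `f` and `g` vary in the same direction, then
`(f x - f y) * (g x - g y) ≥ 0` for all `x, y`, and integrating this over `μ ⊗ μ` gives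
`∫ f * ∫ g ≤ μ(Ω) * ∫ f * g`. Since `c = κ_d t^d / E[Λ₂] ≥ 0`, the weight `exp (-(A - x) * c)` is
nondecreasing in `x`, so `Λ₁` is positively correlated with its weight, which is `J₁₂(t) ≥ 1`.
-/

open MeasureTheory Real Set

section

variable {Ω : Type*} [MeasurableSpace Ω] {μ : Measure Ω}

theorem Monovary.integral_mul_integral_le [IsFiniteMeasure μ] {f g : Ω → ℝ} (hfg : Monovary f g)
    (hf : Integrable f μ) (hg : Integrable g μ) (hfg' : Integrable (fun x => f x * g x) μ) :
    (∫ x, f x ∂μ) * ∫ x, g x ∂μ ≤ μ.real univ * ∫ x, f x * g x ∂μ := by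
  have h_diag₁ : Integrable (fun p : Ω × Ω => f p.1 * g p.1) (μ.prod μ) := by
    simpa using hfg'.mul_prod (integrable_const (1 : ℝ) (μ := μ))
  have h_diag₂ : Integrable (fun p : Ω × Ω => f p.2 * g p.2) (μ.prod μ) := by
    simpa using (integrable_const (1 : ℝ) (μ := μ)).mul_prod hfg'
  have h_rearrange : ∫ p : Ω × Ω, f p.1 * g p.2 + g p.1 * f p.2 ∂μ.prod μ
      ≤ ∫ p : Ω × Ω, f p.1 * g p.1 + f p.2 * g p.2 ∂μ.prod μ :=
    integral_mono ((hf.mul_prod hg).add (hg.mul_prod hf)) (h_diag₁.add h_diag₂) fun p => by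
      linarith [hfg.mul_add_mul_le_mul_add_mul p.1 p.2]
  rw [integral_add (hf.mul_prod hg) (hg.mul_prod hf), integral_prod_mul, integral_prod_mul,
    integral_add h_diag₁ h_diag₂] at h_rearrange
  have e₁ : ∫ p : Ω × Ω, f p.1 * g p.1 ∂μ.prod μ = (∫ x, f x * g x ∂μ) * μ.real univ := by
    simpa using integral_prod_mul (μ := μ) (ν := μ) (fun x => f x * g x) fun _ => (1 : ℝ)
  have e₂ : ∫ p : Ω × Ω, f p.2 * g p.2 ∂μ.prod μ = μ.real univ * ∫ x, f x * g x ∂μ := by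
    simpa using integral_prod_mul (μ := μ) (ν := μ) (fun _ => (1 : ℝ)) fun x => f x * g x
  rw [e₁, e₂] at h_rearrange
  linarith

theorem integrable_of_ae_mem_Icc [IsFiniteMeasure μ] {f : Ω → ℝ} {a b : ℝ}
    (hf : AEStronglyMeasurable f μ) (hab : ∀ᵐ x ∂μ, f x ∈ Icc a b) : Integrable f μ :=
  .of_bound hf (max |a| |b|) (hab.mono fun _ hx => abs_le_max_abs_abs hx.1 hx.2)

theorem Monotone.integrable_comp_of_ae_mem_Icc [IsFiniteMeasure μ] {X : Ω → ℝ} {φ : ℝ → ℝ}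
    {a b : ℝ} (hφ : Monotone φ) (hX : AEMeasurable X μ) (hXab : ∀ᵐ ω ∂μ, X ω ∈ Icc a b) :
    Integrable (fun ω => φ (X ω)) μ :=
  integrable_of_ae_mem_Icc (hφ.measurable.comp_aemeasurable hX).aestronglyMeasurable
    (hXab.mono fun _ hx => ⟨hφ hx.1, hφ hx.2⟩)

theorem integral_mul_integral_comp_le_of_monotone [IsFiniteMeasure μ] {X : Ω → ℝ} {φ : ℝ → ℝ}
    {a b : ℝ} (hX : AEMeasurable X μ) (hXab : ∀ᵐ ω ∂μ, X ω ∈ Icc a b) (hφ : Monotone φ) :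
    (∫ ω, X ω ∂μ) * ∫ ω, φ (X ω) ∂μ ≤ μ.real univ * ∫ ω, X ω * φ (X ω) ∂μ := by
  have hφX := hφ.integrable_comp_of_ae_mem_Icc hX hXab
  exact ((monovary_self X).comp_monotone_left hφ).symm.integral_mul_integral_le
    (integrable_of_ae_mem_Icc hX.aestronglyMeasurable hXab) hφX
    (hφX.bdd_mul hX.aestronglyMeasurable (hXab.mono fun _ hx => abs_le_max_abs_abs hx.1 hx.2))

theorem integral_pos_of_ae_pos [NeZero μ] {f : Ω → ℝ} (hfi : Integrable f μ)
    (hf : ∀ᵐ x ∂μ, 0 < f x) : 0 < ∫ x, f x ∂μ := by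
  rw [integral_pos_iff_support_of_nonneg_ae (hf.mono fun _ hx => hx.le) hfi, pos_iff_ne_zero]
  intro h_null
  have h_zero : ∀ᵐ x ∂μ, f x = 0 := by simpa [ae_iff, Function.support] using h_null
  obtain ⟨x, hpos, hzero⟩ := (hf.and h_zero).exists
  exact hpos.ne' hzero

end

theorem stmt10_general {Ω : Type*} [MeasurableSpace Ω] (μ : Measure Ω) [IsProbabilityMeasure μ]
    (d : ℕ) (Λ₁ : Ω → ℝ) (hm : Measurable Λ₁) (A : ℝ)
    (hsupp : μ {ω | 0 < Λ₁ ω ∧ Λ₁ ω < A} = 1)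
    (Λ₂ : Ω → ℝ) (hΛ₂ : ∀ ω, Λ₂ ω = A - Λ₁ ω)
    (t : ℝ) (ht : 0 ≤ t) :
    1 ≤ (∫ ω, Λ₁ ω * Real.exp (-(Λ₂ ω *
          ((volume (Metric.ball (0 : EuclideanSpace ℝ (Fin d)) 1)).toReal * t ^ d) /
            ∫ ω', Λ₂ ω' ∂μ)) ∂μ) /
        ((∫ ω, Λ₁ ω ∂μ) * ∫ ω, Real.exp (-(Λ₂ ω *
          ((volume (Metric.ball (0 : EuclideanSpace ℝ (Fin d)) 1)).toReal * t ^ d) /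
            ∫ ω', Λ₂ ω' ∂μ)) ∂μ) := by
  set K := (volume (Metric.ball (0 : EuclideanSpace ℝ (Fin d)) 1)).toReal * t ^ d
  set S := ∫ ω', Λ₂ ω' ∂μ
  have hΛ₁ : ∀ᵐ ω ∂μ, Λ₁ ω ∈ Ioo 0 A :=
    (ae_mem_iff_measure_eq (measurableSet_Ioo.preimage hm).nullMeasurableSet).2
      (by rw [measure_univ]; exact hsupp)
  have hΛ₁_Icc : ∀ᵐ ω ∂μ, Λ₁ ω ∈ Icc 0 A := hΛ₁.mono fun _ hω => Ioo_subset_Icc_self hω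
  have hS : 0 ≤ S := integral_nonneg_of_ae (hΛ₁.mono fun ω hω => by simp [hΛ₂, hω.2.le])
  set φ : ℝ → ℝ := fun x => exp (-((A - x) * K / S))
  have hφ : Monotone φ := fun x y hxy => exp_le_exp.2 <| neg_le_neg <|
    div_le_div_of_nonneg_right (mul_le_mul_of_nonneg_right (by linarith) (by positivity)) hS
  simp_rw [hΛ₂]
  rw [le_div_iff₀ (mul_pos ?_ ?_), one_mul]
  · simpa using integral_mul_integral_comp_le_of_monotone hm.aemeasurable hΛ₁_Icc hφ
  · exact integral_pos_of_ae_pos (integrable_of_ae_mem_Icc hm.aestronglyMeasurable hΛ₁_Icc)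
      (hΛ₁.mono fun _ hω => hω.1)
  · exact integral_exp_pos (hφ.integrable_comp_of_ae_mem_Icc hm.aemeasurable hΛ₁_Icc)

/-- In the balanced compound model `Λ₂ = A − Λ₁` with `Λ₁` supported in `(0,A)`,
the cross `J`-function
`J₁₂(t) = E[Λ₁ exp(−Λ₂ κ_d t^d/E[Λ₂])]/(E[Λ₁]·E[exp(−Λ₂ κ_d t^d/E[Λ₂])])` satisfies
`J₁₂(t) ≥ 1` for all `t ≥ 0`, where `κ_d` is the volume of the unit ball in `ℝ^d`. -/
theorem stmt10 {Ω : Type*} [MeasurableSpace Ω] (μ : Measure Ω) [IsProbabilityMeasure μ]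
    (d : ℕ) (Λ₁ : Ω → ℝ) (hm : Measurable Λ₁) (A : ℝ) (hA : 0 < A)
    (hsupp : μ {ω | 0 < Λ₁ ω ∧ Λ₁ ω < A} = 1)
    (Λ₂ : Ω → ℝ) (hΛ₂ : ∀ ω, Λ₂ ω = A - Λ₁ ω)
    (t : ℝ) (ht : 0 ≤ t) :
    1 ≤ (∫ ω, Λ₁ ω * Real.exp (-(Λ₂ ω *
          ((volume (Metric.ball (0 : EuclideanSpace ℝ (Fin d)) 1)).toReal * t ^ d) /
            ∫ ω', Λ₂ ω' ∂μ)) ∂μ) /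
        ((∫ ω, Λ₁ ω ∂μ) * ∫ ω, Real.exp (-(Λ₂ ω *
          ((volume (Metric.ball (0 : EuclideanSpace ℝ (Fin d)) 1)).toReal * t ^ d) /
            ∫ ω', Λ₂ ω' ∂μ)) ∂μ) :=
  stmt10_general μ d Λ₁ hm A hsupp Λ₂ hΛ₂ t ht
end

section
/- In the balanced compound model Λ₂ = A − Λ₁ with Λ₁ supported in (0,A) and having finite second moment, the function t ↦ J(t) := E[Λ₁·exp(−Λ₂·c·t)] / (E[Λ₁]·E[exp(−Λ₂·c·t)]) (for fixed c > 0) is nondecreasing in t ≥ 0. -/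
open MeasureTheory Real

/-! Writing `G_u = exp (-Λ₂ c u)`, monotonicity of `J` amounts to the cross inequality
`E[Λ₁ G_s] E[G_t] ≤ E[Λ₁ G_t] E[G_s]` for `s ≤ t`. Symmetrising over two independent copies,
the difference is `½ E[(Λ₁ - Λ₁') (G_t G_s' - G_s G_t')]`, and each integrand is nonnegative:
`Λ₁ - Λ₁' = Λ₂' - Λ₂`, while `G_t G_s' / (G_s G_t') = exp (c (t - s) (Λ₂' - Λ₂))`. -/

section Chebyshev

variable {Ω : Type*} [MeasurableSpace Ω] {μ : Measure Ω} [SFinite μ]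

theorem integral_mul_mul_integral_le_of_cross_nonneg {f g h : Ω → ℝ}
    (hg : Integrable g μ) (hh : Integrable h μ)
    (hfg : Integrable (fun ω => f ω * g ω) μ) (hfh : Integrable (fun ω => f ω * h ω) μ)
    (hcross : ∀ x y, 0 ≤ (f x - f y) * (g x * h y - h x * g y)) :
    (∫ ω, f ω * h ω ∂μ) * ∫ ω, g ω ∂μ ≤ (∫ ω, f ω * g ω ∂μ) * ∫ ω, h ω ∂μ := by
  have hsplit : (fun z : Ω × Ω => (f z.1 - f z.2) * (g z.1 * h z.2 - h z.1 * g z.2)) =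
      fun z => ((f z.1 * g z.1) * h z.2 - (f z.1 * h z.1) * g z.2) -
        (g z.1 * (f z.2 * h z.2) - h z.1 * (f z.2 * g z.2)) := by
    funext z; ring
  have hsymm : 0 ≤ ∫ z, (f z.1 - f z.2) * (g z.1 * h z.2 - h z.1 * g z.2) ∂μ.prod μ :=
    integral_nonneg fun z => hcross z.1 z.2
  have i₁ : Integrable (fun z : Ω × Ω => f z.1 * g z.1 * h z.2) (μ.prod μ) := hfg.mul_prod hh
  have i₂ : Integrable (fun z : Ω × Ω => f z.1 * h z.1 * g z.2) (μ.prod μ) := hfh.mul_prod hg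
  have i₃ : Integrable (fun z : Ω × Ω => g z.1 * (f z.2 * h z.2)) (μ.prod μ) := hg.mul_prod hfh
  have i₄ : Integrable (fun z : Ω × Ω => h z.1 * (f z.2 * g z.2)) (μ.prod μ) := hh.mul_prod hfg
  rw [hsplit, integral_sub, integral_sub i₁ i₂, integral_sub i₃ i₄,
    integral_prod_mul (fun ω => f ω * g ω) h, integral_prod_mul (fun ω => f ω * h ω) g,
    integral_prod_mul g fun ω => f ω * h ω, integral_prod_mul h fun ω => f ω * g ω] at hsymm
  exacts [by linarith, i₁.sub i₂, i₃.sub i₄]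

end Chebyshev

theorem exp_tilt_cross_nonneg {a b c s t : ℝ} (hc : 0 ≤ c) (hst : s ≤ t) :
    0 ≤ (b - a) * (exp (-(a * c * t)) * exp (-(b * c * s)) -
      exp (-(a * c * s)) * exp (-(b * c * t))) := by
  simp only [← exp_add]
  have hgap : 0 ≤ c * (t - s) := mul_nonneg hc (sub_nonneg.2 hst)
  rcases le_total a b with hab | hba
  · refine mul_nonneg (sub_nonneg.2 hab) (sub_nonneg.2 (exp_le_exp.2 ?_))
    nlinarith [mul_nonneg (sub_nonneg.2 hab) hgap]
  · refine mul_nonneg_of_nonpos_of_nonpos (sub_nonpos.2 hba) (sub_nonpos.2 (exp_le_exp.2 ?_))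
    nlinarith [mul_nonneg (sub_nonneg.2 hba) hgap]

section ExponentialWeight

variable {Ω : Type*} [MeasurableSpace Ω] {μ : Measure Ω} {X : Ω → ℝ} {c u : ℝ}

theorem ae_norm_exp_neg_mul_mul_le_one (hX : ∀ᵐ ω ∂μ, 0 ≤ X ω) (hc : 0 ≤ c) (hu : 0 ≤ u) :
    ∀ᵐ ω ∂μ, ‖exp (-(X ω * c * u))‖ ≤ 1 := hX.mono fun ω hω => by
  rw [norm_of_nonneg (exp_pos _).le, exp_le_one_iff, neg_nonpos]
  positivity

theorem integrable_exp_neg_mul_mul [IsFiniteMeasure μ] (hXm : Measurable X)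
    (hX : ∀ᵐ ω ∂μ, 0 ≤ X ω) (hc : 0 ≤ c) (hu : 0 ≤ u) :
    Integrable (fun ω => exp (-(X ω * c * u))) μ :=
  .of_bound (by fun_prop) 1 (ae_norm_exp_neg_mul_mul_le_one hX hc hu)

theorem MeasureTheory.Integrable.mul_exp_neg_mul_mul {f : Ω → ℝ} (hf : Integrable f μ)
    (hXm : Measurable X) (hX : ∀ᵐ ω ∂μ, 0 ≤ X ω) (hc : 0 ≤ c) (hu : 0 ≤ u) :
    Integrable (fun ω => f ω * exp (-(X ω * c * u))) μ := by
  simpa only [mul_comm] using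
    hf.bdd_mul (by fun_prop) (ae_norm_exp_neg_mul_mul_le_one hX hc hu)

end ExponentialWeight

theorem stmt11_general {Ω : Type*} [MeasurableSpace Ω] (μ : Measure Ω) [IsProbabilityMeasure μ]
    (Λ₁ : Ω → ℝ) (hm : Measurable Λ₁) (A : ℝ)
    (hsupp : μ {ω | 0 < Λ₁ ω ∧ Λ₁ ω < A} = 1)
    (Λ₂ : Ω → ℝ) (hΛ₂ : ∀ ω, Λ₂ ω = A - Λ₁ ω) (c : ℝ) (hc : 0 < c) :
    ∀ s t : ℝ, 0 ≤ s → s ≤ t →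
      (∫ ω, Λ₁ ω * Real.exp (-(Λ₂ ω * c * s)) ∂μ) /
          ((∫ ω, Λ₁ ω ∂μ) * ∫ ω, Real.exp (-(Λ₂ ω * c * s)) ∂μ) ≤
        (∫ ω, Λ₁ ω * Real.exp (-(Λ₂ ω * c * t)) ∂μ) /
          ((∫ ω, Λ₁ ω ∂μ) * ∫ ω, Real.exp (-(Λ₂ ω * c * t)) ∂μ) := by
  intro s t hs hst
  have ht : 0 ≤ t := hs.trans hst
  have hae : ∀ᵐ ω ∂μ, 0 < Λ₁ ω ∧ Λ₁ ω < A :=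
    (ae_iff_measure_eq ((measurableSet_lt measurable_const hm).inter
      (measurableSet_lt hm measurable_const)).nullMeasurableSet).2 (hsupp.trans measure_univ.symm)
  have hm₂ : Measurable Λ₂ := by rw [funext hΛ₂]; fun_prop
  have hΛ₂_nonneg : ∀ᵐ ω ∂μ, 0 ≤ Λ₂ ω := hae.mono fun ω hω => by rw [hΛ₂]; linarith [hω.2]
  have hΛ₁_int : Integrable Λ₁ μ := by
    refine .of_bound hm.aestronglyMeasurable A (hae.mono fun ω hω => ?_)
    rw [norm_eq_abs, abs_of_pos hω.1]; exact hω.2.le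
  have hmean : 0 < ∫ ω, Λ₁ ω ∂μ := by
    rw [integral_pos_iff_support_of_nonneg_ae (hae.mono fun ω hω => hω.1.le) hΛ₁_int]
    calc (0 : ENNReal) < μ {ω | 0 < Λ₁ ω ∧ Λ₁ ω < A} := by simp [hsupp]
      _ ≤ μ (Function.support Λ₁) := measure_mono fun ω hω => hω.1.ne'
  have hcross := integral_mul_mul_integral_le_of_cross_nonneg
    (integrable_exp_neg_mul_mul hm₂ hΛ₂_nonneg hc.le ht)
    (integrable_exp_neg_mul_mul hm₂ hΛ₂_nonneg hc.le hs)
    (hΛ₁_int.mul_exp_neg_mul_mul hm₂ hΛ₂_nonneg hc.le ht)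
    (hΛ₁_int.mul_exp_neg_mul_mul hm₂ hΛ₂_nonneg hc.le hs) fun x y => by
      rw [show Λ₁ x - Λ₁ y = Λ₂ y - Λ₂ x by rw [hΛ₂, hΛ₂]; ring]
      exact exp_tilt_cross_nonneg hc.le hst
  rw [div_le_div_iff₀
    (mul_pos hmean (integral_exp_pos (integrable_exp_neg_mul_mul hm₂ hΛ₂_nonneg hc.le hs)))
    (mul_pos hmean (integral_exp_pos (integrable_exp_neg_mul_mul hm₂ hΛ₂_nonneg hc.le ht)))]
  linear_combination (∫ ω, Λ₁ ω ∂μ) * hcross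

/-- In the balanced compound model `Λ₂ = A − Λ₁` with `Λ₁` supported in `(0,A)` and
having finite second moment, the function
`t ↦ J(t) = E[Λ₁ exp(−Λ₂ c t)]/(E[Λ₁]·E[exp(−Λ₂ c t)])` (for fixed `c > 0`) is nondecreasing
on `t ≥ 0`. -/
theorem stmt11 {Ω : Type*} [MeasurableSpace Ω] (μ : Measure Ω) [IsProbabilityMeasure μ]
    (Λ₁ : Ω → ℝ) (hm : Measurable Λ₁) (A : ℝ) (hA : 0 < A)
    (hsupp : μ {ω | 0 < Λ₁ ω ∧ Λ₁ ω < A} = 1) (hL2 : MemLp Λ₁ 2 μ)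
    (Λ₂ : Ω → ℝ) (hΛ₂ : ∀ ω, Λ₂ ω = A - Λ₁ ω) (c : ℝ) (hc : 0 < c) :
    ∀ s t : ℝ, 0 ≤ s → s ≤ t →
      (∫ ω, Λ₁ ω * Real.exp (-(Λ₂ ω * c * s)) ∂μ) /
          ((∫ ω, Λ₁ ω ∂μ) * ∫ ω, Real.exp (-(Λ₂ ω * c * s)) ∂μ) ≤
        (∫ ω, Λ₁ ω * Real.exp (-(Λ₂ ω * c * t)) ∂μ) /
          ((∫ ω, Λ₁ ω ∂μ) * ∫ ω, Real.exp (-(Λ₂ ω * c * t)) ∂μ) :=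
  stmt11_general μ Λ₁ hm A hsupp Λ₂ hΛ₂ c hc
end

section
/- In the linked compound model Λ₂ = A·Λ₁ (A > 0) with Λ₁ nonnegative having finite second moment and positive mean, the function t ↦ J(t) := E[Λ₁·exp(−Λ₁·c·t)] / (E[Λ₁]·E[exp(−Λ₁·c·t)]) (for fixed c > 0) is nonincreasing in t ≥ 0. -/
/-!
Factor `exp (-X t) = exp (-X (t - s)) * exp (-X s)` for `s ≤ t` and weight by `w = exp (-X s)`.
Then `X` and `g = exp (-X (t - s))` are oppositely ordered, so Chebyshev's integral inequality
`E[X g w] E[w] ≤ E[X w] E[g w]` holds; it follows by integrating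
`(X x - X y) (g x - g y) w x w y ≤ 0` over `μ ⊗ μ`. Cross-multiplied, this says the tilted mean
`E[X exp (-X a)] / E[exp (-X a)]` is antitone in `a`; dividing by the constant `E[Λ₁] ≥ 0`
preserves this.
-/

open MeasureTheory Real

section Chebyshev

variable {α : Type*} [MeasurableSpace α] {μ : Measure α} [SFinite μ] {f g w : α → ℝ}

theorem Antivary.integral_mul_mul_integral_le (hfg : Antivary f g) (hw : 0 ≤ w)
    (hwi : Integrable w μ) (hfw : Integrable (fun x ↦ f x * w x) μ)
    (hgw : Integrable (fun x ↦ g x * w x) μ) (hfgw : Integrable (fun x ↦ f x * g x * w x) μ) :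
    (∫ x, f x * g x * w x ∂μ) * ∫ x, w x ∂μ ≤
      (∫ x, f x * w x ∂μ) * ∫ x, g x * w x ∂μ := by
  have h_expand : ∀ z : α × α, (f z.1 - f z.2) * (g z.1 - g z.2) * (w z.1 * w z.2) =
      (f z.1 * g z.1 * w z.1) * w z.2 + w z.1 * (f z.2 * g z.2 * w z.2)
        - ((f z.1 * w z.1) * (g z.2 * w z.2) + (g z.1 * w z.1) * (f z.2 * w z.2)) :=
    fun z ↦ by ring
  have h_nonpos : ∫ z, (f z.1 - f z.2) * (g z.1 - g z.2) * (w z.1 * w z.2) ∂μ.prod μ ≤ 0 :=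
    integral_nonpos fun z ↦
      mul_nonpos_of_nonpos_of_nonneg (hfg.sub_mul_sub_nonpos _ _) (mul_nonneg (hw _) (hw _))
  have h_diag : Integrable (fun z : α × α ↦
      (f z.1 * g z.1 * w z.1) * w z.2 + w z.1 * (f z.2 * g z.2 * w z.2)) (μ.prod μ) :=
    (hfgw.mul_prod hwi).add (hwi.mul_prod hfgw)
  have h_cross : Integrable (fun z : α × α ↦
      (f z.1 * w z.1) * (g z.2 * w z.2) + (g z.1 * w z.1) * (f z.2 * w z.2)) (μ.prod μ) :=
    (hfw.mul_prod hgw).add (hgw.mul_prod hfw)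
  simp only [h_expand] at h_nonpos
  rw [integral_sub h_diag h_cross, integral_add (hfgw.mul_prod hwi) (hwi.mul_prod hfgw),
    integral_add (hfw.mul_prod hgw) (hgw.mul_prod hfw)] at h_nonpos
  rw [integral_prod_mul (fun x ↦ f x * g x * w x) w,
    integral_prod_mul w (fun x ↦ f x * g x * w x),
    integral_prod_mul (fun x ↦ f x * w x) (fun x ↦ g x * w x),
    integral_prod_mul (fun x ↦ g x * w x) (fun x ↦ f x * w x)] at h_nonpos
  linarith

end Chebyshev

lemma antivary_exp_neg_mul {ι : Type*} (X : ι → ℝ) {a : ℝ} (ha : 0 ≤ a) :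
    Antivary X (fun i ↦ exp (-(X i * a))) :=
  ((monovary_self X).comp_antitone_left (f' := fun x ↦ exp (-(x * a)))
    fun _ _ hxy ↦ exp_le_exp.2 (neg_le_neg (mul_le_mul_of_nonneg_right hxy ha))).symm

section ExponentialTilting

variable {Ω : Type*} [MeasurableSpace Ω] {μ : Measure Ω} {X : Ω → ℝ}

lemma norm_exp_neg_mul_le_one (hX : ∀ᵐ ω ∂μ, 0 ≤ X ω) {a : ℝ} (ha : 0 ≤ a) :
    ∀ᵐ ω ∂μ, ‖exp (-(X ω * a))‖ ≤ 1 := by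
  filter_upwards [hX] with ω hω
  rw [norm_of_nonneg (exp_pos _).le, exp_le_one_iff, neg_nonpos]
  exact mul_nonneg hω ha

lemma integrable_mul_exp_neg_mul (hXi : Integrable X μ) (hX : ∀ᵐ ω ∂μ, 0 ≤ X ω) {a : ℝ}
    (ha : 0 ≤ a) : Integrable (fun ω ↦ X ω * exp (-(X ω * a))) μ :=
  hXi.mul_bdd (hXi.aemeasurable.mul_const a).neg.exp.aestronglyMeasurable
    (norm_exp_neg_mul_le_one hX ha)

variable [IsFiniteMeasure μ]

lemma integrable_exp_neg_mul (hXi : Integrable X μ) (hX : ∀ᵐ ω ∂μ, 0 ≤ X ω) {a : ℝ}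
    (ha : 0 ≤ a) : Integrable (fun ω ↦ exp (-(X ω * a))) μ :=
  Integrable.of_bound (hXi.aemeasurable.mul_const a).neg.exp.aestronglyMeasurable 1
    (norm_exp_neg_mul_le_one hX ha)

theorem antitoneOn_integral_mul_exp_neg_mul_div_integral_exp_neg_mul [NeZero μ]
    (hXi : Integrable X μ) (hX : ∀ᵐ ω ∂μ, 0 ≤ X ω) :
    AntitoneOn (fun a ↦ (∫ ω, X ω * exp (-(X ω * a)) ∂μ) / ∫ ω, exp (-(X ω * a)) ∂μ)
      (Set.Ici 0) := by
  intro s hs t ht hst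
  have hts : 0 ≤ t - s := sub_nonneg.2 hst
  have h_split : ∀ ω, exp (-(X ω * t)) = exp (-(X ω * (t - s))) * exp (-(X ω * s)) := by
    intro ω
    rw [← exp_add]
    ring_nf
  have h_chebyshev := (antivary_exp_neg_mul X hts).integral_mul_mul_integral_le
    (fun ω ↦ (exp_pos _).le) (integrable_exp_neg_mul hXi hX hs)
    (integrable_mul_exp_neg_mul hXi hX hs)
    (by simpa only [h_split] using integrable_exp_neg_mul hXi hX ht)
    (by simpa only [h_split, mul_assoc] using integrable_mul_exp_neg_mul hXi hX ht)
  have hZt : 0 < ∫ ω, exp (-(X ω * t)) ∂μ := integral_exp_pos (integrable_exp_neg_mul hXi hX ht)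
  have hZs : 0 < ∫ ω, exp (-(X ω * s)) ∂μ := integral_exp_pos (integrable_exp_neg_mul hXi hX hs)
  rw [div_le_div_iff₀ hZt hZs]
  simpa only [h_split, mul_assoc] using h_chebyshev

end ExponentialTilting

theorem stmt12_general {Ω : Type*} [MeasurableSpace Ω] (μ : Measure Ω) [IsProbabilityMeasure μ]
    (Λ₁ : Ω → ℝ) (hnn : ∀ ω, 0 ≤ Λ₁ ω)
    (hL2 : MemLp Λ₁ 2 μ)
    (c : ℝ) (hc : 0 < c) :
    ∀ s t : ℝ, 0 ≤ s → s ≤ t →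
      (∫ ω, Λ₁ ω * Real.exp (-(Λ₁ ω * c * t)) ∂μ) /
          ((∫ ω, Λ₁ ω ∂μ) * ∫ ω, Real.exp (-(Λ₁ ω * c * t)) ∂μ) ≤
        (∫ ω, Λ₁ ω * Real.exp (-(Λ₁ ω * c * s)) ∂μ) /
          ((∫ ω, Λ₁ ω ∂μ) * ∫ ω, Real.exp (-(Λ₁ ω * c * s)) ∂μ) := by
  intro s t hs hst
  have h_antitone := antitoneOn_integral_mul_exp_neg_mul_div_integral_exp_neg_mul
    (hL2.integrable one_le_two) (ae_of_all μ hnn)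
  simp only [mul_assoc _ c]
  rw [mul_comm (∫ ω, Λ₁ ω ∂μ) (∫ ω, exp (-(Λ₁ ω * (c * t))) ∂μ),
    mul_comm (∫ ω, Λ₁ ω ∂μ) (∫ ω, exp (-(Λ₁ ω * (c * s))) ∂μ), ← div_div, ← div_div]
  exact div_le_div_of_nonneg_right
    (h_antitone (mul_nonneg hc.le hs) (mul_nonneg hc.le (hs.trans hst))
      (mul_le_mul_of_nonneg_left hst hc.le))
    (integral_nonneg hnn)

/-- In the linked compound model `Λ₂ = A·Λ₁` (`A > 0`) with `Λ₁` nonnegative,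
having finite second moment and positive mean, the function
`t ↦ J(t) = E[Λ₁ exp(−Λ₁ c t)]/(E[Λ₁]·E[exp(−Λ₁ c t)])` (for fixed `c > 0`) is nonincreasing
on `t ≥ 0`. -/
theorem stmt12 {Ω : Type*} [MeasurableSpace Ω] (μ : Measure Ω) [IsProbabilityMeasure μ]
    (Λ₁ : Ω → ℝ) (hm : Measurable Λ₁) (hnn : ∀ ω, 0 ≤ Λ₁ ω)
    (hL2 : MemLp Λ₁ 2 μ) (hpos : 0 < ∫ ω, Λ₁ ω ∂μ)
    (A : ℝ) (hA : 0 < A) (Λ₂ : Ω → ℝ) (hΛ₂ : ∀ ω, Λ₂ ω = A * Λ₁ ω)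
    (c : ℝ) (hc : 0 < c) :
    ∀ s t : ℝ, 0 ≤ s → s ≤ t →
      (∫ ω, Λ₁ ω * Real.exp (-(Λ₁ ω * c * t)) ∂μ) /
          ((∫ ω, Λ₁ ω ∂μ) * ∫ ω, Real.exp (-(Λ₁ ω * c * t)) ∂μ) ≤
        (∫ ω, Λ₁ ω * Real.exp (-(Λ₁ ω * c * s)) ∂μ) /
          ((∫ ω, Λ₁ ω ∂μ) * ∫ ω, Real.exp (-(Λ₁ ω * c * s)) ∂μ) :=
  stmt12_general μ Λ₁ hnn hL2 c hc
end
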